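/- arXiv:1802.03001 — 3 statements merged into one kernel-verified Lean document; each statement's English description precedes it below -/
import Mathlib

section
/- Fix a loss function ℓ : ℝ × Y → ℝ, λ > 0, samples (x_i, y_i) ∈ ℝ^p × Y for i = 1,…,m, and for each j = 1,…,p a strictly monotone continuous bijection φ_j : ℝ → ℝ; write φ(x) = (φ_1(x_1),…,φ_p(x_p)). For any tuple (f_1,…,f_p) of compactly supported functions f_j : ℝ → ℝ with f(x) = Σ_j f_j(x_j), the objective value Σ_{i=1}^m ℓ(f(φ(x_i)), y_i) + λ Σ_{j=1}^p TV(f_j) equals Σ_{i=1}^m ℓ((f∘φ)(x_i), y_i) + λ Σ_{j=1}^p TV(f_j ∘ φ_j). Consequently, if the tuple (f*_1,…,f*_p) minimizes the objective with respect to the transformed samples (φ(x_i), y_i), then the tuple (f*_1∘φ_1,…,f*_p∘φ_p) minimizes the objective with respect to the original samples (x_i, y_i). -/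
/-- Total variation of a function `f : ℝ → ℝ`: the supremum over all strictly
increasing sequences `x : ℕ → ℝ` of `∑' n, |f (x n) - f (x (n+1))|`. -/
noncomputable def TV (f : ℝ → ℝ) : ℝ :=
  sSup {v : ℝ | ∃ x : ℕ → ℝ, StrictMono x ∧ v = ∑' n, |f (x n) - f (x (n + 1))|}

/-!
Total variation only sees the values of `f` along chains `t₀ < t₁ < ⋯ < t_N`: a strictly
increasing `φ` maps chains to chains, a strictly decreasing one maps them to reversed chains,
and the sum of `|f (t (n+1)) - f (t n)|` along a chain does not depend on its direction. So `f` and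
`f ∘ φ` have the same chain sums and hence the same total variation, and both the data-fit term and
the penalty of the objective are unchanged when `f_j` is replaced by `f_j ∘ φ_j`. For the
minimality statement, a competitor `f` on the original samples is pulled back to
`f_j ∘ φ_j⁻¹` on the transformed ones, which is compactly supported because `φ_j` is continuous.
-/

open Set Filter Function

theorem csSup_eq_csSup_of_upperBounds_eq {α : Type*} [ConditionallyCompleteLinearOrder α]
    {s t : Set α} (hs : s.Nonempty) (ht : t.Nonempty) (h : upperBounds s = upperBounds t) :
    sSup s = sSup t := by
  by_cases hb : BddAbove s
  · have hb' : BddAbove t := by rwa [BddAbove, ← h]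
    exact (isLUB_csSup hs hb).unique (by rw [IsLUB, h]; exact isLUB_csSup ht hb')
  · have hb' : ¬BddAbove t := by rwa [BddAbove, ← h]
    rw [csSup_of_not_bddAbove hb, csSup_of_not_bddAbove hb']

theorem StrictMono.strictMono_of_rightInverse {α β : Type*} [LinearOrder α] [Preorder β]
    {φ : α → β} {ψ : β → α} (hφ : StrictMono φ) (h : RightInverse ψ φ) : StrictMono ψ :=
  fun a b hab => hφ.lt_iff_lt.1 (by rwa [h a, h b])

theorem StrictAnti.strictAnti_of_rightInverse {α β : Type*} [LinearOrder α] [Preorder β]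
    {φ : α → β} {ψ : β → α} (hφ : StrictAnti φ) (h : RightInverse ψ φ) : StrictAnti ψ :=
  fun a b hab => hφ.lt_iff_gt.1 (by rwa [h a, h b])

theorem exists_strictMono_extend_of_strictMonoOn {N : ℕ} {t : ℕ → ℝ}
    (ht : StrictMonoOn t (Iic N)) (B : ℝ) :
    ∃ z : ℕ → ℝ, StrictMono z ∧ (∀ n ≤ N, z n = t n) ∧ ∀ n, N < n → B < z n := by
  refine ⟨fun n => if n ≤ N then t n else max (t N) B + n, strictMono_nat_of_lt_succ fun n => ?_,
    fun n hn => if_pos hn, fun n hn => ?_⟩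
  · rcases lt_trichotomy n N with hn | rfl | hn
    · simp only [if_pos hn.le, if_pos (Nat.succ_le_of_lt hn)]
      exact ht (mem_Iic.2 hn.le) (mem_Iic.2 hn) n.lt_succ_self
    · simp only [le_refl, if_true, if_neg n.not_succ_le_self]
      have : (0 : ℝ) < (n : ℝ) + 1 := by positivity
      push_cast; linarith [le_max_left (t n) B]
    · simp only [if_neg hn.not_ge, if_neg (by omega : ¬n + 1 ≤ N)]
      push_cast; linarith
  · simp only [if_neg hn.not_ge]
    have : (0 : ℝ) < n := by exact_mod_cast (Nat.zero_le N).trans_lt hn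
    linarith [le_max_right (t N) B]

theorem tendsto_atTop_cocompact_of_surjective {φ : ℝ → ℝ} (hφ : StrictMono φ ∨ StrictAnti φ)
    (hs : Surjective φ) : Tendsto φ atTop (cocompact ℝ) := by
  rcases hφ with hφ | hφ
  · exact (tendsto_atTop_atTop_of_monotone hφ.monotone fun b =>
      ⟨surjInv hs b, (surjInv_eq hs b).ge⟩).mono_right atTop_le_cocompact
  · exact (tendsto_atTop_atBot_of_antitone hφ.antitone fun b =>
      ⟨surjInv hs b, (surjInv_eq hs b).le⟩).mono_right atBot_le_cocompact

namespace TV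

variable {f φ : ℝ → ℝ}

def seqSums (f : ℝ → ℝ) : Set ℝ :=
  {v | ∃ x : ℕ → ℝ, StrictMono x ∧ v = ∑' n, |f (x n) - f (x (n + 1))|}

def chainSums (f : ℝ → ℝ) : Set ℝ :=
  {v | ∃ N, ∃ t : ℕ → ℝ, StrictMonoOn t (Iic N) ∧
    v = ∑ n ∈ Finset.range N, |f (t n) - f (t (n + 1))|}

theorem seqSums_nonempty (f : ℝ → ℝ) : (seqSums f).Nonempty :=
  ⟨_, (↑), Nat.strictMono_cast, rfl⟩

/-- `TV` takes `tsum`s along infinite sequences, which are `0` when not summable. Extending a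
finite chain into the region where `f` vanishes turns its sum into a genuine `tsum`. -/
theorem upperBounds_seqSums (hf : ∀ᶠ t in atTop, f t = 0) :
    upperBounds (seqSums f) = upperBounds (chainSums f) := by
  ext c
  constructor
  · rintro hc v ⟨N, t, ht, rfl⟩
    obtain ⟨B, hB⟩ := hf.exists_forall_of_atTop
    obtain ⟨z, hz, hzt, hzB⟩ := exists_strictMono_extend_of_strictMonoOn ht B
    have htail : ∀ n ∉ Finset.range (N + 1), |f (z n) - f (z (n + 1))| = 0 := fun n hn => by
      rw [Finset.mem_range, not_lt] at hn
      rw [hB _ (hzB n (by omega)).le, hB _ (hzB (n + 1) (by omega)).le, sub_self, abs_zero]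
    calc ∑ n ∈ Finset.range N, |f (t n) - f (t (n + 1))|
        = ∑ n ∈ Finset.range N, |f (z n) - f (z (n + 1))| :=
          Finset.sum_congr rfl fun n hn => by
            rw [Finset.mem_range] at hn
            rw [hzt n hn.le, hzt (n + 1) hn]
      _ ≤ ∑ n ∈ Finset.range (N + 1), |f (z n) - f (z (n + 1))| :=
          Finset.sum_le_sum_of_subset_of_nonneg (Finset.range_subset_range.2 N.le_succ)
            fun _ _ _ => abs_nonneg _
      _ = ∑' n, |f (z n) - f (z (n + 1))| := (tsum_eq_sum htail).symm
      _ ≤ c := hc ⟨z, hz, rfl⟩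
  · rintro hc v ⟨x, hx, rfl⟩
    exact Real.tsum_le_of_sum_range_le (fun _ => abs_nonneg _)
      fun N => hc ⟨N, x, hx.strictMonoOn _, rfl⟩

theorem chainSums_comp_subset (hφ : StrictMono φ ∨ StrictAnti φ) :
    chainSums (f ∘ φ) ⊆ chainSums f := by
  rintro v ⟨N, t, ht, rfl⟩
  rcases hφ with hφ | hφ
  · exact ⟨N, φ ∘ t, hφ.comp_strictMonoOn ht, rfl⟩
  -- reversing the chain turns it into an increasing one, with the same sum
  refine ⟨N, fun k => φ (t (N - k)), fun a _ b hb hab => hφ (ht ?_ ?_ ?_), ?_⟩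
  · exact mem_Iic.2 (Nat.sub_le N b)
  · exact mem_Iic.2 (Nat.sub_le N a)
  · exact Nat.sub_lt_sub_left (hab.trans_le hb) hab
  rw [← Finset.sum_range_reflect]
  refine Finset.sum_congr rfl fun n hn => ?_
  rw [Finset.mem_range] at hn
  dsimp only [comp_apply]
  rw [show N - 1 - n + 1 = N - n by omega, show N - 1 - n = N - (n + 1) by omega, abs_sub_comm]

theorem chainSums_comp (hφ : StrictMono φ ∨ StrictAnti φ) (hs : Surjective φ) :
    chainSums (f ∘ φ) = chainSums f := by
  have hψ : StrictMono (surjInv hs) ∨ StrictAnti (surjInv hs) :=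
    hφ.imp (·.strictMono_of_rightInverse (rightInverse_surjInv hs))
      (·.strictAnti_of_rightInverse (rightInverse_surjInv hs))
  refine (chainSums_comp_subset hφ).antisymm ?_
  calc chainSums f = chainSums ((f ∘ φ) ∘ surjInv hs) := by
        rw [comp_assoc, (rightInverse_surjInv hs).comp_eq_id, comp_id]
    _ ⊆ chainSums (f ∘ φ) := chainSums_comp_subset hψ

theorem comp_of_eventually_atTop (hφ : StrictMono φ ∨ StrictAnti φ) (hs : Surjective φ)
    (hf : ∀ᶠ t in atTop, f t = 0) (hfφ : ∀ᶠ t in atTop, (f ∘ φ) t = 0) :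
    TV (f ∘ φ) = TV f := by
  have hub : upperBounds (seqSums (f ∘ φ)) = upperBounds (seqSums f) := by
    rw [upperBounds_seqSums hfφ, upperBounds_seqSums hf, chainSums_comp hφ hs]
  exact csSup_eq_csSup_of_upperBounds_eq (seqSums_nonempty _) (seqSums_nonempty _) hub

theorem comp_of_hasCompactSupport (hφ : StrictMono φ ∨ StrictAnti φ) (hs : Surjective φ)
    (hf : HasCompactSupport f) : TV (f ∘ φ) = TV f := by
  have hf0 : f =ᶠ[cocompact ℝ] 0 :=
    coclosedCompact_eq_cocompact (X := ℝ) ▸ hasCompactSupport_iff_eventuallyEq.1 hf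
  exact comp_of_eventually_atTop hφ hs (hf0.filter_mono atTop_le_cocompact)
    ((tendsto_atTop_cocompact_of_surjective hφ hs).eventually hf0)

end TV

theorem HasCompactSupport.comp_rightInverse {α β M : Type*} [TopologicalSpace α]
    [TopologicalSpace β] [R1Space β] [Zero M] {f : α → M} {φ : α → β} {ψ : β → α}
    (hf : HasCompactSupport f) (hφ : Continuous φ) (h : RightInverse ψ φ) :
    HasCompactSupport (f ∘ ψ) :=
  HasCompactSupport.intro (hf.isCompact.image hφ) fun x hx =>
    show f (ψ x) = 0 from image_eq_zero_of_notMem_tsupport fun hψx => hx ⟨ψ x, hψx, h x⟩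

theorem tv_erm_invariance_general {Y : Type*} (p m : ℕ) (ℓ : ℝ → Y → ℝ) (lam : ℝ)
    (x : Fin m → Fin p → ℝ) (y : Fin m → Y)
    (φ : Fin p → ℝ → ℝ)
    (hφmono : ∀ j, StrictMono (φ j) ∨ StrictAnti (φ j))
    (hφcont : ∀ j, Continuous (φ j))
    (hφbij : ∀ j, Function.Bijective (φ j)) :
    (∀ f : Fin p → ℝ → ℝ, (∀ j, HasCompactSupport (f j)) →
      (∑ i, ℓ (∑ j, f j (φ j (x i j))) (y i)) + lam * ∑ j, TV (f j)
        = (∑ i, ℓ (∑ j, (f j ∘ φ j) (x i j)) (y i)) + lam * ∑ j, TV (f j ∘ φ j)) ∧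
    (∀ fstar : Fin p → ℝ → ℝ, (∀ j, HasCompactSupport (fstar j)) →
      (∀ f : Fin p → ℝ → ℝ, (∀ j, HasCompactSupport (f j)) →
        (∑ i, ℓ (∑ j, fstar j (φ j (x i j))) (y i)) + lam * ∑ j, TV (fstar j)
          ≤ (∑ i, ℓ (∑ j, f j (φ j (x i j))) (y i)) + lam * ∑ j, TV (f j)) →
      (∀ f : Fin p → ℝ → ℝ, (∀ j, HasCompactSupport (f j)) →
        (∑ i, ℓ (∑ j, (fstar j ∘ φ j) (x i j)) (y i)) + lam * ∑ j, TV (fstar j ∘ φ j)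
          ≤ (∑ i, ℓ (∑ j, f j (x i j)) (y i)) + lam * ∑ j, TV (f j))) := by
  have hTV : ∀ g : Fin p → ℝ → ℝ, (∀ j, HasCompactSupport (g j)) →
      ∀ j, TV (g j ∘ φ j) = TV (g j) :=
    fun g hg j => TV.comp_of_hasCompactSupport (hφmono j) (hφbij j).2 (hg j)
  refine ⟨fun f hf => by simp only [comp_apply, hTV f hf], fun fstar hfstar hmin f hf => ?_⟩
  let g : Fin p → ℝ → ℝ := fun j => f j ∘ surjInv (hφbij j).2
  have hg : ∀ j, HasCompactSupport (g j) := fun j =>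
    (hf j).comp_rightInverse (hφcont j) (rightInverse_surjInv (hφbij j).2)
  have hgφ : ∀ j t, g j (φ j t) = f j t := fun j t =>
    congrArg (f j) (leftInverse_surjInv (hφbij j) t)
  have hTVg : ∀ j, TV (g j) = TV (f j) := fun j =>
    (hTV g hg j).symm.trans (congrArg TV (funext (hgφ j)))
  simpa only [comp_apply, hTV fstar hfstar, hgφ, hTVg] using hmin g hg

/-- Invariance of TV-regularized empirical risk minimization under coordinatewise
strictly monotone continuous bijective transformations of the explanatory
variables: (a) for any tuple of compactly supported weight functions the
objective value on the transformed samples equals the objective value of the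
composed tuple on the original samples, and (b) if a tuple minimizes the
objective on the transformed samples then the composed tuple minimizes the
objective on the original samples. -/
theorem tv_erm_invariance {Y : Type*} (p m : ℕ) (ℓ : ℝ → Y → ℝ) (lam : ℝ) (hlam : 0 < lam)
    (x : Fin m → Fin p → ℝ) (y : Fin m → Y)
    (φ : Fin p → ℝ → ℝ)
    (hφmono : ∀ j, StrictMono (φ j) ∨ StrictAnti (φ j))
    (hφcont : ∀ j, Continuous (φ j))
    (hφbij : ∀ j, Function.Bijective (φ j)) :
    (∀ f : Fin p → ℝ → ℝ, (∀ j, HasCompactSupport (f j)) →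
      (∑ i, ℓ (∑ j, f j (φ j (x i j))) (y i)) + lam * ∑ j, TV (f j)
        = (∑ i, ℓ (∑ j, (f j ∘ φ j) (x i j)) (y i)) + lam * ∑ j, TV (f j ∘ φ j)) ∧
    (∀ fstar : Fin p → ℝ → ℝ, (∀ j, HasCompactSupport (fstar j)) →
      (∀ f : Fin p → ℝ → ℝ, (∀ j, HasCompactSupport (f j)) →
        (∑ i, ℓ (∑ j, fstar j (φ j (x i j))) (y i)) + lam * ∑ j, TV (fstar j)
          ≤ (∑ i, ℓ (∑ j, f j (φ j (x i j))) (y i)) + lam * ∑ j, TV (f j)) →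
      (∀ f : Fin p → ℝ → ℝ, (∀ j, HasCompactSupport (f j)) →
        (∑ i, ℓ (∑ j, (fstar j ∘ φ j) (x i j)) (y i)) + lam * ∑ j, TV (fstar j ∘ φ j)
          ≤ (∑ i, ℓ (∑ j, f j (x i j)) (y i)) + lam * ∑ j, TV (f j))) :=
  tv_erm_invariance_general p m ℓ lam x y φ hφmono hφcont hφbij
end

section
/- Let m ∈ ℕ and v_1,…,v_m ∈ ℝ. Then there exists a family of real numbers (w_{ij}) indexed by pairs 1 ≤ i ≤ j ≤ m such that 2 Σ_{1 ≤ i ≤ j ≤ m} |w_{ij}| = |v_1| + Σ_{i=1}^{m−1} |v_i − v_{i+1}| + |v_m| and, for every i' ∈ {1,…,m}, Σ_{(i,j) : i ≤ i' ≤ j} w_{ij} = v_{i'}. -/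
/-!
Write `U` for `v` padded with a zero on each side, and lay the upward jumps of `U` end to end on
`[0, T]` (the jump at position `a` occupying `[upMass U a, upMass U (a + 1)]`), and likewise the
downward jumps; both fill `[0, T]` because `U` starts and ends at `0`, and `2 T` is the total
variation. Overlapping the two tilings couples up-jumps with down-jumps. A coupled pair of jumps at
positions `a < c` is an interval `[a, c - 1]` of indices of `v`, carrying its mass with sign `+` if
the jump at `a` goes up and `-` if it goes down. Every index `k` then sees exactly the up-jumps
at or before `k` minus the down-jumps at or before `k`, i.e. `v k`; and since no position carries
both an up- and a down-jump, no cancellation occurs, so the absolute weights add up to `T`.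
-/

open Finset

lemma Fin.sum_Ici_comp_val {M : Type*} [AddCommMonoid M] {n : ℕ} (i : Fin n) (f : ℕ → M) :
    ∑ j ∈ Ici i, f j = ∑ j ∈ Ico (i : ℕ) n, f j := by
  rw [← Fin.map_valEmbedding_Ici, sum_map]
  rfl

lemma Fin.sum_Iic_comp_val {M : Type*} [AddCommMonoid M] {n : ℕ} (i : Fin n) (f : ℕ → M) :
    ∑ j ∈ Iic i, f j = ∑ j ∈ range (i + 1), f j := by
  rw [Nat.range_succ_eq_Iic, ← Fin.map_valEmbedding_Iic, sum_map]
  rfl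

namespace IntervalDecomposition

/-- The length of `[a, b] ∩ [x, y]`. -/
def overlap (a b x y : ℝ) : ℝ := max 0 (min b y - max a x)

lemma overlap_comm (a b x y : ℝ) : overlap a b x y = overlap x y a b := by
  rw [overlap, overlap, min_comm, max_comm a]

lemma overlap_self (a b x : ℝ) : overlap a b x x = 0 :=
  max_eq_left (sub_nonpos.2 ((min_le_right b x).trans (le_max_right a x)))

lemma overlap_self_left (a x y : ℝ) : overlap a a x y = 0 := by
  rw [overlap_comm, overlap_self]

lemma overlap_nonneg (a b x y : ℝ) : 0 ≤ overlap a b x y := le_max_left _ _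

lemma overlap_add {a b x y z : ℝ} (hxy : x ≤ y) (hyz : y ≤ z) :
    overlap a b x y + overlap a b y z = overlap a b x z := by
  simp only [overlap, max_def, min_def]
  split_ifs <;> linarith

lemma sum_Ico_overlap (a b : ℝ) {F : ℕ → ℝ} (hF : Monotone F) {m l : ℕ} (hml : m ≤ l) :
    ∑ k ∈ Ico m l, overlap a b (F k) (F (k + 1)) = overlap a b (F m) (F l) := by
  induction l, hml using Nat.le_induction with
  | base => rw [Ico_self, sum_empty, overlap_self]
  | succ l hml ih =>
    rw [sum_Ico_succ_top hml, ih, overlap_add (hF hml) (hF l.le_succ)]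

lemma sum_Ico_sum_Ico_overlap {F G : ℕ → ℝ} (hF : Monotone F) (hG : Monotone G)
    {i₀ i₁ j₀ j₁ : ℕ} (hi : i₀ ≤ i₁) (hj : j₀ ≤ j₁) :
    ∑ i ∈ Ico i₀ i₁, ∑ j ∈ Ico j₀ j₁, overlap (F i) (F (i + 1)) (G j) (G (j + 1)) =
      overlap (F i₀) (F i₁) (G j₀) (G j₁) := by
  simp_rw [sum_Ico_overlap _ _ hG hj, overlap_comm _ _ (G j₀)]
  exact sum_Ico_overlap _ _ hF hi

lemma overlap_sub_overlap {p q T : ℝ} (hp : 0 ≤ p) (hq : 0 ≤ q) (hpT : p ≤ T)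
    (hqT : q ≤ T) :
    overlap 0 p q T - overlap 0 q p T = p - q := by
  simp only [overlap, max_def, min_def]
  split_ifs <;> linarith

lemma overlap_add_overlap {a a' b b' T : ℝ} (ha : a ≤ a') (hb : b ≤ b') (haT : a' ≤ T)
    (hbT : b' ≤ T) (h : a' = a ∨ b' = b) :
    overlap a a' b' T + overlap b b' a' T = max a' b' - max a b := by
  rcases h with rfl | rfl <;>
  · simp only [overlap, max_def, min_def]
    split_ifs <;> linarith

section

variable (U : ℕ → ℝ)

def upMass (m : ℕ) : ℝ := ∑ k ∈ range m, (U (k + 1) - U k)⁺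

def downMass (m : ℕ) : ℝ := ∑ k ∈ range m, (U (k + 1) - U k)⁻

lemma monotone_upMass : Monotone (upMass U) :=
  monotone_nat_of_le_succ fun k => by
    simp [upMass, sum_range_succ]

lemma monotone_downMass : Monotone (downMass U) :=
  monotone_nat_of_le_succ fun k => by
    simp [downMass, sum_range_succ]

@[simp] lemma upMass_zero : upMass U 0 = 0 := sum_range_zero _

@[simp] lemma downMass_zero : downMass U 0 = 0 := sum_range_zero _

lemma upMass_sub_downMass (m : ℕ) : upMass U m - downMass U m = U m - U 0 := by
  simp only [upMass, downMass, ← sum_sub_distrib, posPart_sub_negPart, sum_range_sub]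

lemma upMass_add_downMass (m : ℕ) :
    upMass U m + downMass U m = ∑ k ∈ range m, |U (k + 1) - U k| := by
  simp only [upMass, downMass, ← sum_add_distrib, posPart_add_negPart]

lemma upMass_succ_eq_or_downMass_succ_eq (k : ℕ) :
    upMass U (k + 1) = upMass U k ∨ downMass U (k + 1) = downMass U k := by
  simp only [upMass, downMass, sum_range_succ, add_eq_left, posPart_eq_zero, negPart_eq_zero]
  exact le_total _ _

lemma monotone_upMass_add_one : Monotone fun j => upMass U (j + 1) :=
  (monotone_upMass U).comp fun _ _ h => Nat.add_le_add_right h 1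

lemma monotone_downMass_add_one : Monotone fun j => downMass U (j + 1) :=
  (monotone_downMass U).comp fun _ _ h => Nat.add_le_add_right h 1

lemma upMass_eq_downMass {m : ℕ} (h : U m = U 0) : upMass U m = downMass U m :=
  sub_eq_zero.1 (by rw [upMass_sub_downMass, h, sub_self])

def intervalWeight (i j : ℕ) : ℝ :=
  overlap (upMass U i) (upMass U (i + 1)) (downMass U (j + 1)) (downMass U (j + 2)) -
    overlap (downMass U i) (downMass U (i + 1)) (upMass U (j + 1)) (upMass U (j + 2))

variable {U} {n : ℕ}

theorem sum_range_sum_Ico_intervalWeight (hU : U (n + 2) = U 0) {k : ℕ} (hk : k ≤ n) :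
    ∑ i ∈ range (k + 1), ∑ j ∈ Ico k (n + 1), intervalWeight U i j = U (k + 1) - U 0 := by
  have hP := monotone_upMass U
  have hQ := monotone_downMass U
  have hP' := monotone_upMass_add_one U
  have hQ' := monotone_downMass_add_one U
  have hT := upMass_eq_downMass U hU
  calc ∑ i ∈ range (k + 1), ∑ j ∈ Ico k (n + 1), intervalWeight U i j
      = overlap (upMass U 0) (upMass U (k + 1)) (downMass U (k + 1)) (downMass U (n + 2)) -
          overlap (downMass U 0) (downMass U (k + 1)) (upMass U (k + 1)) (upMass U (n + 2)) := by
        simp only [intervalWeight, sum_sub_distrib, range_eq_Ico]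
        exact congr_arg₂ _ (sum_Ico_sum_Ico_overlap hP hQ' (by omega) (by omega))
          (sum_Ico_sum_Ico_overlap hQ hP' (by omega) (by omega))
    _ = upMass U (k + 1) - downMass U (k + 1) := by
        rw [upMass_zero, downMass_zero, hT]
        exact overlap_sub_overlap (hP (Nat.zero_le _)) (hQ (Nat.zero_le _))
          (hT ▸ hP (by omega)) (hQ (by omega))
    _ = U (k + 1) - U 0 := upMass_sub_downMass U _

lemma abs_intervalWeight (i j : ℕ) :
    |intervalWeight U i j| =
      overlap (upMass U i) (upMass U (i + 1)) (downMass U (j + 1)) (downMass U (j + 2)) +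
        overlap (downMass U i) (downMass U (i + 1)) (upMass U (j + 1)) (upMass U (j + 2)) := by
  rcases upMass_succ_eq_or_downMass_succ_eq U i with h | h <;>
    rw [intervalWeight, h, overlap_self_left]
  · rw [zero_sub, abs_neg, zero_add, abs_of_nonneg (overlap_nonneg _ _ _ _)]
  · rw [sub_zero, add_zero, abs_of_nonneg (overlap_nonneg _ _ _ _)]

theorem two_mul_sum_range_sum_Ico_abs_intervalWeight (hU : U (n + 2) = U 0) :
    2 * ∑ i ∈ range (n + 1), ∑ j ∈ Ico i (n + 1), |intervalWeight U i j| =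
      ∑ k ∈ range (n + 2), |U (k + 1) - U k| := by
  have hP := monotone_upMass U
  have hQ := monotone_downMass U
  have hP' := monotone_upMass_add_one U
  have hQ' := monotone_downMass_add_one U
  have hT := upMass_eq_downMass U hU
  -- `max (upMass U i) (downMass U i)` is the coupling mass on pairs of positions not both `≥ i`
  have hrow : ∀ i ∈ range (n + 1), ∑ j ∈ Ico i (n + 1), |intervalWeight U i j| =
      max (upMass U (i + 1)) (downMass U (i + 1)) - max (upMass U i) (downMass U i) := by
    intro i hi
    rw [mem_range] at hi
    simp only [abs_intervalWeight, sum_add_distrib]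
    rw [sum_Ico_overlap _ _ hQ' hi.le, sum_Ico_overlap _ _ hP' hi.le, hT]
    exact overlap_add_overlap (hP i.le_succ) (hQ i.le_succ) (hT ▸ hP (by omega)) (hQ (by omega))
      (upMass_succ_eq_or_downMass_succ_eq U i)
  have hlast : max (upMass U (n + 1)) (downMass U (n + 1)) = downMass U (n + 2) := by
    rcases upMass_succ_eq_or_downMass_succ_eq U (n + 1) with h | h
    · have hP_last : upMass U (n + 1) = downMass U (n + 2) := by rw [← h]; exact hT
      rw [hP_last]
      exact max_eq_left (hQ (by omega))
    · have hQ_last : downMass U (n + 1) = downMass U (n + 2) := h.symm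
      rw [hQ_last]
      exact max_eq_right (hT ▸ hP (by omega))
  rw [sum_congr rfl hrow, sum_range_sub (fun k => max (upMass U k) (downMass U k)), hlast,
    ← upMass_add_downMass, hT, upMass_zero, downMass_zero, max_self, sub_zero, two_mul]

end

def padZero {n : ℕ} (v : Fin (n + 1) → ℝ) : ℕ → ℝ
  | 0 => 0
  | k + 1 => if h : k < n + 1 then v ⟨k, h⟩ else 0

lemma padZero_succ {n : ℕ} (v : Fin (n + 1) → ℝ) (i : Fin (n + 1)) :
    padZero v (i + 1) = v i := by
  simp [padZero, i.isLt]

lemma sum_range_abs_sub_padZero {n : ℕ} (v : Fin (n + 1) → ℝ) :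
    ∑ k ∈ range (n + 2), |padZero v (k + 1) - padZero v k| =
      |v 0| + ∑ i : Fin n, |v i.castSucc - v i.succ| + |v (Fin.last n)| := by
  have hmid (i : Fin n) :
      |padZero v (i + 1 + 1) - padZero v (i + 1)| = |v i.castSucc - v i.succ| := by
    rw [abs_sub_comm, ← padZero_succ v i.succ, ← padZero_succ v i.castSucc]
    rfl
  have hfirst : padZero v (0 + 1) - padZero v 0 = v 0 := by simp [padZero]
  have hlast : padZero v (n + 1 + 1) - padZero v (n + 1) = -v (Fin.last n) := by
    simp [padZero, Fin.last]
  rw [sum_range_succ, sum_range_succ', ← Fin.sum_univ_eq_sum_range,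
    sum_congr rfl fun i _ => hmid i, hfirst, hlast, abs_neg]
  ring

end IntervalDecomposition

open IntervalDecomposition

/-- Decomposition of prescribed values into interval weights: there exist
weights `w i j` (for pairs `i ≤ j`) whose doubled absolute sum equals
`|v 0| + ∑ |v i - v (i+1)| + |v last|`, and such that for each `i'` the sum of
`w i j` over all intervals `[i, j]` containing `i'` equals `v i'`. -/
theorem interval_weight_decomposition (n : ℕ) (v : Fin (n + 1) → ℝ) :
    ∃ w : Fin (n + 1) → Fin (n + 1) → ℝ,
      2 * (∑ i : Fin (n + 1), ∑ j ∈ Finset.univ.filter (fun j => i ≤ j), |w i j|)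
          = |v 0| + (∑ i : Fin n, |v i.castSucc - v i.succ|) + |v (Fin.last n)| ∧
      ∀ i' : Fin (n + 1),
        (∑ i ∈ Finset.univ.filter (fun i => i ≤ i'),
          ∑ j ∈ Finset.univ.filter (fun j => i' ≤ j), w i j) = v i' := by
  set U := padZero v
  have hU : U (n + 2) = U 0 := by simp [U, padZero]
  refine ⟨fun i j => intervalWeight U i j, ?_, fun i' => ?_⟩
  · simp only [filter_le_eq_Ici]
    rw [sum_congr rfl fun i _ => Fin.sum_Ici_comp_val i fun j => |intervalWeight U i j|,
      Fin.sum_univ_eq_sum_range (fun i => ∑ j ∈ Ico i (n + 1), |intervalWeight U i j|),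
      two_mul_sum_range_sum_Ico_abs_intervalWeight hU, sum_range_abs_sub_padZero]
  · simp only [filter_le_eq_Ici, filter_ge_eq_Iic]
    rw [sum_congr rfl fun (i : Fin (n + 1)) _ =>
        Fin.sum_Ici_comp_val i' fun j => intervalWeight U i j,
      Fin.sum_Iic_comp_val i' fun i => ∑ j ∈ Ico (i' : ℕ) (n + 1), intervalWeight U i j,
      sum_range_sum_Ico_intervalWeight hU (Nat.lt_succ_iff.1 i'.isLt)]
    exact (sub_zero _).trans (padZero_succ v i')
end

section
/- Let X be a set, x_1,…,x_m ∈ X, and let F be a class of functions f : X → ℝ such that the suprema below are finite and the relevant expectations exist. Then E_γ [ sup_{f∈F} Σ_{i=1}^m γ_i f(x_i) ] ≥ √(2/π) · E_ε [ sup_{f∈F} Σ_{i=1}^m ε_i f(x_i) ], where γ_1,…,γ_m are independent standard Gaussian random variables and ε_1,…,ε_m are independent uniform ±1 random variables. -/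
open MeasureTheory ProbabilityTheory Real Filter
open scoped ENNReal NNReal

lemma hasDerivAux (y : ℝ) : HasDerivAt (fun x : ℝ => -rexp (-x^2/2)) (y * rexp (-y^2/2)) y := by
  have h1 : HasDerivAt (fun x : ℝ => -x^2/2) (-y) y := by
    have := ((hasDerivAt_pow 2 y).neg).div_const 2
    refine this.congr_deriv ?_
    simp
    ring
  have := (h1.exp).neg
  refine this.congr_deriv ?_
  ring

lemma integral_Ioi_id_exp : ∫ x in Set.Ioi (0:ℝ), x * rexp (-x^2/2) = 1 := by
  have hint : IntegrableOn (fun x : ℝ => x * rexp (-x^2/2)) (Set.Ioi 0) := by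
    have h := (integrable_mul_exp_neg_mul_sq (b := 1/2) (by norm_num)).integrableOn (s := Set.Ioi 0)
    refine h.congr_fun (fun x _ => by ring_nf) measurableSet_Ioi
  have htend : Tendsto (fun x : ℝ => -rexp (-x^2/2)) atTop (nhds 0) := by
    rw [show (0:ℝ) = -0 by ring]
    refine Tendsto.neg ?_
    refine Real.tendsto_exp_atBot.comp ?_
    have h : Tendsto (fun x : ℝ => x^2/2) atTop atTop :=
      (tendsto_pow_atTop (by norm_num)).atTop_div_const (by norm_num)
    have := tendsto_neg_atBot_iff.mpr h
    refine this.congr (fun x => by ring)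
  have := integral_Ioi_of_hasDerivAt_of_tendsto' (a := 0)
    (f := fun x : ℝ => -rexp (-x^2/2)) (f' := fun x : ℝ => x * rexp (-x^2/2))
    (fun y _ => hasDerivAux y) hint htend
  simpa using this

lemma pdf_mul_abs_eq (x : ℝ) :
    gaussianPDFReal 0 1 x * |x| = (√(2*π))⁻¹ * (|x| * rexp (-|x|^2/2)) := by
  rw [gaussianPDFReal]
  rw [sq_abs]
  push_cast
  ring_nf

lemma integrable_pdf_mul_abs :
    Integrable (fun x : ℝ => gaussianPDFReal 0 1 x * |x|) := by
  have h : Integrable (fun x : ℝ => x * rexp (-(1/2) * x^2)) :=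
    integrable_mul_exp_neg_mul_sq (by norm_num)
  have h2 := h.abs
  refine (h2.const_mul ((√(2*π))⁻¹)).congr (ae_of_all _ (fun x => ?_))
  simp only [pdf_mul_abs_eq, abs_mul, abs_of_pos (exp_pos _), sq_abs]
  ring_nf

lemma sqrt_arith : (√(2*π))⁻¹ * 2 = √(2/π) := by
  have hpos : (0:ℝ) < √(2*π) := Real.sqrt_pos.mpr (by positivity)
  have h : √(2/π) * √(2*π) = 2 := by
    rw [← Real.sqrt_mul (by positivity)]
    rw [show 2/π*(2*π) = 4 by field_simp; ring]
    rw [show (4:ℝ) = 2^2 by norm_num, Real.sqrt_sq (by norm_num)]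
  rw [inv_mul_eq_div, div_eq_iff hpos.ne']
  linarith [h]

lemma integral_pdf_mul_abs :
    ∫ x : ℝ, gaussianPDFReal 0 1 x * |x| = √(2/π) := by
  simp_rw [pdf_mul_abs_eq]
  rw [integral_const_mul]
  rw [integral_comp_abs (f := fun x : ℝ => x * rexp (-x^2/2)), integral_Ioi_id_exp]
  rw [mul_one, sqrt_arith]

lemma gaussianReal_one : gaussianReal 0 1
    = (volume : Measure ℝ).withDensity (fun x => ((gaussianPDFReal 0 1 x).toNNReal : ℝ≥0∞)) := by
  rw [gaussianReal_of_var_ne_zero _ one_ne_zero]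
  rfl

lemma integrable_abs_gaussian : Integrable (fun x : ℝ => |x|) (gaussianReal 0 1) := by
  rw [gaussianReal_one, integrable_withDensity_iff_integrable_coe_smul₀
    (measurable_gaussianPDFReal 0 1).real_toNNReal.aemeasurable]
  refine integrable_pdf_mul_abs.congr (ae_of_all _ (fun x => ?_))
  simp only [NNReal.smul_def, Real.coe_toNNReal _ (gaussianPDFReal_nonneg 0 1 x), smul_eq_mul]

lemma integral_abs_gaussian : ∫ x : ℝ, |x| ∂(gaussianReal 0 1) = √(2/π) := by
  rw [gaussianReal_one, integral_withDensity_eq_integral_smul₀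
    (measurable_gaussianPDFReal 0 1).real_toNNReal.aemeasurable]
  rw [← integral_pdf_mul_abs]
  congr 1; ext x
  simp only [NNReal.smul_def, Real.coe_toNNReal _ (gaussianPDFReal_nonneg 0 1 x), smul_eq_mul]

instance : NullSingletonClass (gaussianReal 0 1) :=
  ⟨fun y => gaussianReal_absolutelyContinuous 0 one_ne_zero (measure_singleton y)⟩

variable {m : ℕ}

local notation "μpi" => Measure.pi fun _ : Fin m => gaussianReal 0 1

lemma map_eval_pi (i : Fin m) : (μpi).map (Function.eval i) = gaussianReal 0 1 := by
  refine Measure.ext (fun s hs => ?_)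
  rw [Measure.map_apply (measurable_pi_apply i) hs, Set.eval_preimage, Measure.pi_pi]
  rw [Finset.prod_eq_single i (fun j _ hj => by simp [Function.update_of_ne hj]) (by simp)]
  simp

lemma mpEval (i : Fin m) :
    MeasurePreserving (Function.eval i) (μpi) (gaussianReal 0 1) :=
  ⟨measurable_pi_apply i, map_eval_pi i⟩

lemma integrable_coord_abs (i : Fin m) : Integrable (fun γ : Fin m → ℝ => |γ i|) μpi :=
  ((mpEval i).integrable_comp continuous_abs.aestronglyMeasurable).mpr integrable_abs_gaussian

lemma integral_coord_abs (i : Fin m) : ∫ γ : Fin m → ℝ, |γ i| ∂μpi = √(2/π) := by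
  have h := integral_map (μ := μpi) (φ := Function.eval i) (f := fun x : ℝ => |x|)
    (measurable_pi_apply i).aemeasurable
    (by rw [map_eval_pi i]; exact continuous_abs.aestronglyMeasurable)
  rw [map_eval_pi i, integral_abs_gaussian] at h
  exact h.symm

lemma map_sign_gauss {c : ℝ} (hc : c = 1 ∨ c = -1) :
    MeasurePreserving (fun y : ℝ => c * y) (gaussianReal 0 1) (gaussianReal 0 1) := by
  refine ⟨measurable_const_mul c, ?_⟩
  rw [gaussianReal_map_const_mul c]
  have h2 : (NNReal.mk (c^2) (sq_nonneg c) : ℝ≥0) = 1 := by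
    rcases hc with h | h <;> rw [h] <;> ext <;> norm_num
  rw [h2]
  simp

lemma mpNeg (e : Fin m → ℝ) (he : ∀ i, e i = 1 ∨ e i = -1) :
    MeasurePreserving (fun (γ : Fin m → ℝ) i => e i * γ i) (μpi) (μpi) :=
  measurePreserving_pi _ _ (fun i => map_sign_gauss (he i))

/-- Gaussian expectation of the supremum dominates `√(2/π)` times the
Rademacher expectation of the supremum: for any class `F` of real-valued
functions on `X` (with nonempty `F`, suprema bounded and the Gaussian
expectation existing),
`E_γ[sup_{f∈F} ∑ γ i f(x i)] ≥ √(2/π) · E_ε[sup_{f∈F} ∑ ε i f(x i)]`,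
where the `ε`-expectation is the average over all `2^m` sign patterns. -/
theorem gaussian_sup_ge_rademacher_sup {X : Type*} (m : ℕ) (x : Fin m → X)
    (F : Set (X → ℝ)) (hne : F.Nonempty)
    (hbdd : ∀ γ : Fin m → ℝ, BddAbove {s : ℝ | ∃ f ∈ F, s = ∑ i, γ i * f (x i)})
    (hint : Integrable
      (fun γ : Fin m → ℝ => sSup {s : ℝ | ∃ f ∈ F, s = ∑ i, γ i * f (x i)})
      (Measure.pi fun _ : Fin m => gaussianReal 0 1)) :
    (∫ γ : Fin m → ℝ, sSup {s : ℝ | ∃ f ∈ F, s = ∑ i, γ i * f (x i)}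
        ∂(Measure.pi fun _ : Fin m => gaussianReal 0 1))
      ≥ Real.sqrt (2 / π) * ((1 / 2 ^ m) *
          ∑ ε : Fin m → Bool,
            sSup {s : ℝ | ∃ f ∈ F, s = ∑ i, (if ε i then (1 : ℝ) else -1) * f (x i)}) := by
  classical
  obtain ⟨f0, hf0⟩ := hne
  set μm := (Measure.pi fun _ : Fin m => gaussianReal 0 1) with hμm
  set S : (Fin m → ℝ) → ℝ := fun γ => sSup {s : ℝ | ∃ f ∈ F, s = ∑ i, γ i * f (x i)} with hSdef
  set εv : (Fin m → Bool) → (Fin m → ℝ) := fun ε i => if ε i then (1:ℝ) else -1 with hεv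
  have hgoal_eq : ∀ ε : Fin m → Bool,
      sSup {s : ℝ | ∃ f ∈ F, s = ∑ i, (if ε i then (1 : ℝ) else -1) * f (x i)} = S (εv ε) := by
    intro ε; rfl
  simp only [hgoal_eq]
  set N : (Fin m → Bool) → (Fin m → ℝ) → (Fin m → ℝ) := fun ε γ i => εv ε i * γ i with hN
  have he : ∀ ε : Fin m → Bool, ∀ i, εv ε i = 1 ∨ εv ε i = -1 := by
    intro ε i; by_cases h : ε i <;> simp [hεv, h]
  have mp : ∀ ε, MeasurePreserving (N ε) μm μm := fun ε => mpNeg (εv ε) (he ε)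
  have hnontriv : ∀ γ : Fin m → ℝ,
      (∑ i, γ i * f0 (x i)) ∈ {s : ℝ | ∃ f ∈ F, s = ∑ i, γ i * f (x i)} :=
    fun γ => ⟨f0, hf0, rfl⟩
  have hIntN : ∀ ε, Integrable (fun γ => S (N ε γ)) μm := by
    intro ε
    exact ((mp ε).integrable_comp hint.1).mpr hint
  have hEqN : ∀ ε, ∫ γ, S (N ε γ) ∂μm = ∫ γ, S γ ∂μm := by
    intro ε
    have h := integral_map (φ := N ε) (f := S) (mp ε).measurable.aemeasurable
      (by rw [(mp ε).map_eq]; exact hint.1)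
    rw [(mp ε).map_eq] at h
    exact h.symm
  set T : (Fin m → ℝ) → ℝ := fun γ => ∑ ε : Fin m → Bool, S (N ε γ) with hT
  have hIntT : Integrable T μm := integrable_finset_sum _ (fun ε _ => hIntN ε)
  have hTint : ∫ γ, T γ ∂μm = (2^m : ℝ) * ∫ γ, S γ ∂μm := by
    rw [integral_finset_sum _ (fun ε _ => hIntN ε)]
    simp_rw [hEqN]
    rw [Finset.sum_const, Finset.card_univ, nsmul_eq_mul]
    norm_num [Fintype.card_fun]
  -- main estimate for every δ > 0
  have key : ∀ δ : ℝ, 0 < δ →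
      √(2/π) * ((1 / 2 ^ m) * ∑ ε : Fin m → Bool, S (εv ε))
        ≤ (∫ γ, S γ ∂μm) + √(2/π) * δ := by
    intro δ hδ
    -- choose near-optimal functions
    have hex : ∀ ε : Fin m → Bool, ∃ f ∈ F, S (εv ε) - δ < ∑ i, εv ε i * f (x i) := by
      intro ε
      obtain ⟨a, ha, hlt⟩ := exists_lt_of_lt_csSup ⟨_, hnontriv (εv ε)⟩
        (show S (εv ε) - δ < S (εv ε) from sub_lt_self _ hδ)
      obtain ⟨f, hf, rfl⟩ := ha
      exact ⟨f, hf, hlt⟩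
    choose g hgF hglt using hex
    set L : (Fin m → ℝ) → ℝ :=
      fun γ => ∑ ε : Fin m → Bool, ∑ i, (εv ε i * g ε (x i)) * |γ i| with hL
    have hIntL : Integrable L μm :=
      integrable_finset_sum _ (fun ε _ => integrable_finset_sum _
        (fun i _ => (integrable_coord_abs i).const_mul _))
    have hLint : ∫ γ, L γ ∂μm
        = ∑ ε : Fin m → Bool, ∑ i, (εv ε i * g ε (x i)) * √(2/π) := by
      rw [integral_finset_sum _ (fun ε _ => integrable_finset_sum _
        (fun i _ => (integrable_coord_abs i).const_mul _))]
      refine Finset.sum_congr rfl (fun ε _ => ?_)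
      rw [integral_finset_sum _ (fun i _ => (integrable_coord_abs i).const_mul _)]
      refine Finset.sum_congr rfl (fun i _ => ?_)
      rw [integral_const_mul, integral_coord_abs i]
    -- a.e. pointwise bound L ≤ T
    have hae : ∀ᵐ γ ∂μm, ∀ i, γ i ≠ 0 := by
      rw [ae_all_iff]
      intro i
      exact Measure.ae_eval_ne (fun _ : Fin m => gaussianReal 0 1) i 0
    have hLT : L ≤ᵐ[μm] T := by
      filter_upwards [hae] with γ hγ
      have hσinv : Function.Involutive
          (fun ε : Fin m → Bool => fun i => xor (ε i) (decide (γ i < 0))) := by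
        intro ε; funext i
        cases h : decide (γ i < 0) <;> cases h2 : ε i <;> simp [h, h2]
      set σ := hσinv.toPerm with hσ
      have hcoord : ∀ (ε : Fin m → Bool) i, εv (σ ε) i * γ i = εv ε i * |γ i| := by
        intro ε i
        rcases (hγ i).lt_or_gt with h | h
        · have hd : decide (γ i < 0) = true := by simp [h]
          have habs : |γ i| = -γ i := abs_of_neg h
          show εv (fun j => xor (ε j) (decide (γ j < 0))) i * γ i = _
          cases h2 : ε i <;> simp [hεv, hd, h2, habs] <;> ring
        · have hd : decide (γ i < 0) = false := by simp [not_lt.mpr h.le]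
          have habs : |γ i| = γ i := abs_of_pos h
          show εv (fun j => xor (ε j) (decide (γ j < 0))) i * γ i = _
          cases h2 : ε i <;> simp [hεv, hd, h2, habs]
      have hre : T γ = ∑ ε : Fin m → Bool, S (N (σ ε) γ) :=
        (Equiv.sum_comp σ (fun ε => S (N ε γ))).symm
      rw [hre]
      refine Finset.sum_le_sum (fun ε _ => ?_)
      have hmem : (∑ i, (εv ε i * |γ i|) * g ε (x i))
          ∈ {s : ℝ | ∃ f ∈ F, s = ∑ i, (N (σ ε) γ) i * f (x i)} := by
        refine ⟨g ε, hgF ε, ?_⟩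
        refine Finset.sum_congr rfl (fun i _ => ?_)
        rw [show (N (σ ε) γ) i = εv (σ ε) i * γ i from rfl, hcoord ε i]
      have hle := le_csSup (hbdd (N (σ ε) γ)) hmem
      refine le_trans (le_of_eq ?_) hle
      refine Finset.sum_congr rfl (fun i _ => ?_)
      ring
    have hmono := integral_mono_ae hIntL hIntT hLT
    -- lower bound the integral of L
    have hlow : ∑ ε : Fin m → Bool, √(2/π) * (S (εv ε) - δ) ≤ ∫ γ, L γ ∂μm := by
      rw [hLint]
      refine Finset.sum_le_sum (fun ε _ => ?_)
      have : √(2/π) * (S (εv ε) - δ) ≤ √(2/π) * ∑ i, εv ε i * g ε (x i) :=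
        mul_le_mul_of_nonneg_left (le_of_lt (hglt ε)) (Real.sqrt_nonneg _)
      refine le_trans this (le_of_eq ?_)
      rw [Finset.mul_sum]
      refine Finset.sum_congr rfl (fun i _ => ?_)
      ring
    -- combine
    have h2m : (0:ℝ) < 2^m := by positivity
    have hcomb : ∑ ε : Fin m → Bool, √(2/π) * (S (εv ε) - δ)
        ≤ (2^m : ℝ) * ∫ γ, S γ ∂μm := by
      calc ∑ ε : Fin m → Bool, √(2/π) * (S (εv ε) - δ) ≤ ∫ γ, L γ ∂μm := hlow
      _ ≤ ∫ γ, T γ ∂μm := hmono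
      _ = (2^m : ℝ) * ∫ γ, S γ ∂μm := hTint
    have hsum : ∑ ε : Fin m → Bool, √(2/π) * (S (εv ε) - δ)
        = √(2/π) * (∑ ε : Fin m → Bool, S (εv ε)) - (2^m : ℝ) * (√(2/π) * δ) := by
      rw [Finset.mul_sum]
      rw [show ∑ ε : Fin m → Bool, √(2/π) * (S (εv ε) - δ)
        = ∑ ε : Fin m → Bool, (√(2/π) * S (εv ε) - √(2/π) * δ) from
        Finset.sum_congr rfl (fun ε _ => by ring)]
      rw [Finset.sum_sub_distrib, Finset.sum_const, Finset.card_univ, nsmul_eq_mul]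
      norm_num [Fintype.card_fun]
    rw [hsum] at hcomb
    rw [show √(2/π) * ((1 / 2 ^ m) * ∑ ε : Fin m → Bool, S (εv ε))
      = (√(2/π) * ∑ ε : Fin m → Bool, S (εv ε)) / 2^m from by ring, div_le_iff₀ h2m]
    nlinarith [hcomb]
  -- conclude
  rw [ge_iff_le]
  refine le_of_forall_pos_le_add (fun η hη => ?_)
  have hsq : (0:ℝ) < √(2/π) := Real.sqrt_pos.mpr (by positivity)
  have := key (η / √(2/π)) (by positivity)
  rw [mul_div_cancel₀ _ hsq.ne'] at this
  exact this
end
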